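/- Let d ≥ 1, let Σ be a symmetric positive definite d×d real matrix, let (α,R,T) ∈ ℝ_{>0} × SO(d) × ℝ^d, and let n ≥ 1, q_1,…,q_n, b_1,…,b_n ∈ ℝ^d. Set Σ' = α⁻² RᵀΣR, q'_i = α⁻¹ Rᵀ(q_i − T) and b'_i = α Rᵀ b_i. Then ∑_{i,j=1}^n ⟨b'_i, k_{Σ'}(q'_i, q'_j) b'_j⟩ = ∑_{i,j=1}^n ⟨b_i, k_Σ(q_i, q_j) b_j⟩; equivalently, ∑_{i,j} exp(−(1/2)(q'_i−q'_j)ᵀΣ'⁻¹(q'_i−q'_j)) b'_iᵀ Σ' b'_j = ∑_{i,j} exp(−(1/2)(q_i−q_j)ᵀΣ⁻¹(q_i−q_j)) b_iᵀ Σ b_j. This is the norm-preservation identity |u'|_{V_{Σ'}} = |u|_{V_Σ} of the map u ↦ dφ_{(α,R,T)}⁻¹ u ∘ φ_{(α,R,T)} evaluated on finite kernel sums. -/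
import Mathlib


open Matrix

/-- The scalar part of the anisotropic Gaussian kernel associated to a metric `S` (denoted
`Σ` in the paper): `exp(−(1/2) (x−y)ᵀ S⁻¹ (x−y))`, so that `k_S(x,y)b = kexp S x y • (S b)`. -/
noncomputable def kexp {d : ℕ} (S : Matrix (Fin d) (Fin d) ℝ) (x y : Fin d → ℝ) : ℝ :=
  Real.exp (-(1 / 2) * ((x - y) ⬝ᵥ S⁻¹.mulVec (x - y)))

lemma conj_dot {d : ℕ} (R M : Matrix (Fin d) (Fin d) ℝ) (hR : R * R.transpose = 1)
    (u w : Fin d → ℝ) :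
    (R.transpose.mulVec u) ⬝ᵥ (R.transpose * M * R).mulVec (R.transpose.mulVec w)
      = u ⬝ᵥ M.mulVec w := by
  rw [← Matrix.mulVec_mulVec, ← Matrix.mulVec_mulVec, Matrix.mulVec_mulVec _ R, hR,
    Matrix.one_mulVec, Matrix.dotProduct_mulVec _ R.transpose, Matrix.vecMul_transpose,
    Matrix.mulVec_mulVec, hR, Matrix.one_mulVec]

lemma inv_conj {d : ℕ} (S R : Matrix (Fin d) (Fin d) ℝ) (hS : S.PosDef)
    (hR : R.transpose * R = 1) (α : ℝ) (hα : 0 < α) :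
    ((α ^ 2)⁻¹ • (R.transpose * S * R))⁻¹ = (α ^ 2) • (R.transpose * S⁻¹ * R) := by
  apply Matrix.inv_eq_right_inv
  rw [Matrix.smul_mul, Matrix.mul_smul, smul_smul, inv_mul_cancel₀ (by positivity : (α:ℝ)^2 ≠ 0),
    one_smul]
  have h1 : R * R.transpose = 1 := mul_eq_one_comm.mp hR
  have h2 : S * S⁻¹ = 1 :=
    Matrix.mul_nonsing_inv S (isUnit_iff_ne_zero.mpr hS.det_pos.ne')
  calc R.transpose * S * R * (R.transpose * S⁻¹ * R)
      = R.transpose * (S * ((R * R.transpose) * S⁻¹)) * R := by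
        simp only [Matrix.mul_assoc]
    _ = 1 := by rw [h1, Matrix.one_mul, h2, Matrix.mul_one, hR]

/-- Norm preservation under transport of finite kernel fields by a similarity `(α,R,T)`:
with `Σ' = α⁻²RᵀΣR`, `q'ᵢ = α⁻¹Rᵀ(qᵢ − T)`, `b'ᵢ = αRᵀbᵢ`, one has
`∑_{i,j} ⟨b'ᵢ, k_{Σ'}(q'ᵢ,q'ⱼ)b'ⱼ⟩ = ∑_{i,j} ⟨bᵢ, k_Σ(qᵢ,qⱼ)bⱼ⟩`, i.e. the RKHS norm
identity `|u'|_{V_{Σ'}} = |u|_{V_Σ}` on finite kernel sums. -/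
theorem anisotropic_kernel_norm_preservation {d n : ℕ} (hd : 1 ≤ d) (hn : 1 ≤ n)
    (S : Matrix (Fin d) (Fin d) ℝ) (hS : S.PosDef)
    (α : ℝ) (hα : 0 < α)
    (R : Matrix (Fin d) (Fin d) ℝ) (hR : R.transpose * R = 1) (hRdet : R.det = 1)
    (T : Fin d → ℝ) (q b : Fin n → (Fin d → ℝ)) :
    (∑ i, ∑ j,
        kexp ((α ^ 2)⁻¹ • (R.transpose * S * R))
            (α⁻¹ • R.transpose.mulVec (q i - T)) (α⁻¹ • R.transpose.mulVec (q j - T))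
          * ((α • R.transpose.mulVec (b i)) ⬝ᵥ
              ((α ^ 2)⁻¹ • (R.transpose * S * R)).mulVec (α • R.transpose.mulVec (b j))))
      = ∑ i, ∑ j, kexp S (q i) (q j) * (b i ⬝ᵥ S.mulVec (b j)) := by
  have h1 : R * R.transpose = 1 := mul_eq_one_comm.mp hR
  refine Finset.sum_congr rfl fun i _ => Finset.sum_congr rfl fun j _ => ?_
  congr 1
  · unfold kexp
    congr 2
    rw [inv_conj S R hS hR α hα]
    have hdiff : α⁻¹ • R.transpose.mulVec (q i - T) - α⁻¹ • R.transpose.mulVec (q j - T)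
        = α⁻¹ • R.transpose.mulVec (q i - q j) := by
      rw [← smul_sub, ← Matrix.mulVec_sub]
      congr 1
      abel
    rw [hdiff, Matrix.mulVec_smul, Matrix.smul_mulVec, dotProduct_smul, smul_dotProduct,
      dotProduct_smul, conj_dot R S⁻¹ h1, smul_smul, smul_smul, smul_eq_mul]
    have hc : α⁻¹ * α⁻¹ * α ^ 2 = 1 := by field_simp
    rw [hc, one_mul]
  · rw [Matrix.mulVec_smul, Matrix.smul_mulVec, dotProduct_smul, smul_dotProduct,
      dotProduct_smul, conj_dot R S h1, smul_smul, smul_smul, smul_eq_mul]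
    have hc : α * α * (α ^ 2)⁻¹ = 1 := by field_simp
    rw [hc, one_mul]
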